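/- Let a > 0 and let u : B(0,8a) → ℝ be C¹ on the open ball B(0,8a) ⊂ ℝ². Assume that for all x ∈ B(0,4a), y ∈ B(0,8a), and λ with 0 < λ < 2a and λ < |y - x|, one has u(x + λ²(y-x)/|y-x|²) - 4·ln(|y-x|/λ) ≤ u(y). Then |∇u(x)| ≤ 2/a for all x with |x| < a. -/

import Mathlib

/-!
At `λ = |y - x|` the transform `u_{x,λ}(y)` equals `u(y)`, so the hypothesis says that
`λ ↦ u_{x,λ}(y)` is maximal on `(0, |y - x|]` at the right endpoint; hence its derivative there,
`(2 / |y - x|) (∇u(y) · (y - x) + 2)`, is nonnegative. Taking `x = y - a w` for unit vectors `w`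
(admissible when `|y| < a`) gives `∇u(y) · w ≥ -2 / a` for every `w`, and replacing `w` by `-w`
gives `|∇u(y) · w| ≤ 2 / a`.
-/

open Set Metric

theorem HasDerivAt.nonneg_of_le_of_mem_Ioo {f : ℝ → ℝ} {f' a b : ℝ} (hf : HasDerivAt f f' a)
    (hb : b < a) (hle : ∀ l ∈ Ioo b a, f l ≤ f a) : 0 ≤ f' := by
  refine ge_of_tendsto (hasDerivAt_iff_tendsto_slope_left_right.mp hf).1 ?_
  filter_upwards [Ioo_mem_nhdsLT hb] with l hl
  rw [slope_def_field]
  exact div_nonneg_of_nonpos (sub_nonpos.mpr (hle l hl)) (sub_nonpos.mpr hl.2.le)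

section Kelvin

variable {E : Type*} [NormedAddCommGroup E] [NormedSpace ℝ E]

noncomputable def kelvinTransform (u : E → ℝ) (x : E) (lam : ℝ) (y : E) : ℝ :=
  u (x + (lam ^ 2 / ‖y - x‖ ^ 2) • (y - x)) - 4 * Real.log (‖y - x‖ / lam)

theorem kelvinTransform_self_norm (u : E → ℝ) (x y : E) (hxy : x ≠ y) :
    kelvinTransform u x ‖y - x‖ y = u y := by
  have : ‖y - x‖ ≠ 0 := norm_ne_zero_iff.mpr (sub_ne_zero.mpr hxy.symm)
  simp [kelvinTransform, div_self, this]

theorem hasDerivAt_kelvinTransform_self_norm {u : E → ℝ} {L : E →L[ℝ] ℝ} {x y : E}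
    (hL : HasFDerivAt u L y) (hxy : x ≠ y) :
    HasDerivAt (fun lam => kelvinTransform u x lam y) (2 / ‖y - x‖ * (L (y - x) + 2)) ‖y - x‖ := by
  set r := ‖y - x‖
  have hr : r ≠ 0 := norm_ne_zero_iff.mpr (sub_ne_zero.mpr hxy.symm)
  have hpath : HasDerivAt (fun lam : ℝ => x + (lam ^ 2 / r ^ 2) • (y - x)) ((2 / r) • (y - x)) r := by
    have := ((hasDerivAt_pow 2 r).div_const (r ^ 2)).smul_const (y - x) |>.const_add x
    convert this using 2
    field_simp
    norm_num
  have hend : x + (r ^ 2 / r ^ 2) • (y - x) = y := by simp [div_self, hr]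
  have hu := (hend ▸ hL).comp_hasDerivAt r hpath
  have hlog := ((hasDerivAt_const r r).div (hasDerivAt_id' r) hr).log (by simp [hr])
  have hφ : HasDerivAt (fun lam => kelvinTransform u x lam y)
      (L ((2 / r) • (y - x)) - 4 * ((0 * r - r * 1) / r ^ 2 / (r / r))) r :=
    hu.sub (hlog.const_mul 4)
  convert hφ using 1
  rw [map_smul, smul_eq_mul]
  field_simp
  ring

theorem neg_two_le_of_kelvinTransform_le {u : E → ℝ} {L : E →L[ℝ] ℝ} {x y : E}
    (hL : HasFDerivAt u L y) (hxy : x ≠ y)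
    (hle : ∀ lam ∈ Ioo 0 ‖y - x‖, kelvinTransform u x lam y ≤ u y) : -2 ≤ L (y - x) := by
  have hr : 0 < ‖y - x‖ := norm_pos_iff.mpr (sub_ne_zero.mpr hxy.symm)
  have hderiv := (hasDerivAt_kelvinTransform_self_norm hL hxy).nonneg_of_le_of_mem_Ioo hr
    (by simpa only [kelvinTransform_self_norm u x y hxy] using hle)
  linarith [nonneg_of_mul_nonneg_right hderiv (by positivity)]

end Kelvin

theorem stmt2 (a : ℝ) (ha : 0 < a) (u : EuclideanSpace ℝ (Fin 2) → ℝ)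
    (hu : ContDiffOn ℝ 1 u (Metric.ball 0 (8 * a)))
    (h : ∀ x y : EuclideanSpace ℝ (Fin 2), ∀ lam : ℝ,
      x ∈ Metric.ball (0 : EuclideanSpace ℝ (Fin 2)) (4 * a) →
      y ∈ Metric.ball (0 : EuclideanSpace ℝ (Fin 2)) (8 * a) →
      0 < lam → lam < 2 * a → lam < ‖y - x‖ →
      u (x + (lam ^ 2 / ‖y - x‖ ^ 2) • (y - x)) - 4 * Real.log (‖y - x‖ / lam) ≤ u y) :
    ∀ x : EuclideanSpace ℝ (Fin 2), ‖x‖ < a → ‖fderiv ℝ u x‖ ≤ 2 / a := by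
  intro y hy
  have hy8 : y ∈ Metric.ball 0 (8 * a) := mem_ball_zero_iff.mpr (by linarith)
  have hL : HasFDerivAt u (fderiv ℝ u y) y :=
    ((hu.differentiableOn one_ne_zero).differentiableAt (isOpen_ball.mem_nhds hy8)).hasFDerivAt
  have hdir : ∀ w, ‖w‖ = 1 → -(2 / a) ≤ fderiv ℝ u y w := by
    intro w hw
    have hr : ‖y - (y - a • w)‖ = a := by simp [norm_smul, hw, ha.le]
    have hx : y - a • w ∈ Metric.ball 0 (4 * a) := by
      rw [mem_ball_zero_iff]
      calc ‖y - a • w‖ ≤ ‖y‖ + ‖a • w‖ := norm_sub_le _ _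
        _ = ‖y‖ + a := by rw [norm_smul, hw, Real.norm_of_nonneg ha.le, mul_one]
        _ < 4 * a := by linarith
    have hxy : y - a • w ≠ y := fun hxy => by simp [hxy] at hr; linarith
    have key := neg_two_le_of_kelvinTransform_le hL hxy fun lam hlam =>
      h _ y lam hx hy8 hlam.1 (by linarith [hlam.2]) hlam.2
    rw [sub_sub_cancel, map_smul, smul_eq_mul] at key
    rw [← neg_div, div_le_iff₀ ha]
    linarith
  refine ContinuousLinearMap.opNorm_le_of_unit_norm (by positivity) fun w hw =>
    abs_le.mpr ⟨hdir w hw, ?_⟩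
  have hneg := hdir (-w) (by rwa [norm_neg])
  rw [map_neg] at hneg
  linarith
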